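/- Let X₁,…,X_m ⊆ ℝ^n be nonempty convex closed sets and p(x) = (2τ)^{-1}( Σ_{i=1}^{m−1} ‖x_i − x_{i+1}‖² + ‖x_m − x₁‖² ) on X = X₁×…×X_m. If at least one set X_i is bounded, then p is coercive on X and hence attains its minimum over X (the set X*(p) is nonempty). -/

import Mathlib

/-- The i-th block of a vector x ∈ ℝ^{nm}. -/
noncomputable def blk {m n : ℕ} (x : EuclideanSpace ℝ (Fin m × Fin n)) (i : Fin m) :
    EuclideanSpace ℝ (Fin n) :=
  (WithLp.equiv 2 (Fin n → ℝ)).symm fun j => x (i, j)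

/-- The cycle consensus penalty. -/
noncomputable def cyclePenalty {m n : ℕ} [NeZero m] (τ : ℝ)
    (x : EuclideanSpace ℝ (Fin m × Fin n)) : ℝ :=
  (2 * τ)⁻¹ * ∑ i : Fin m, ‖blk x i - blk x (i + 1)‖ ^ 2

lemma blk_apply {m n : ℕ} (x : EuclideanSpace ℝ (Fin m × Fin n)) (i : Fin m) (j : Fin n) :
    blk x i j = x (i, j) := rfl

lemma blk_sub {m n : ℕ} (x y : EuclideanSpace ℝ (Fin m × Fin n)) (i : Fin m) :
    blk (x - y) i = blk x i - blk y i := rfl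

lemma norm_sq_eq_sum_blk {m n : ℕ} (x : EuclideanSpace ℝ (Fin m × Fin n)) :
    ‖x‖ ^ 2 = ∑ i : Fin m, ‖blk x i‖ ^ 2 := by
  have h1 : ‖x‖ ^ 2 = ∑ p : Fin m × Fin n, ‖x p‖ ^ 2 := by
    rw [EuclideanSpace.norm_eq, Real.sq_sqrt (Finset.sum_nonneg fun _ _ => sq_nonneg _)]
  rw [h1, Fintype.sum_prod_type]
  refine Finset.sum_congr rfl fun i _ => ?_
  rw [EuclideanSpace.norm_eq, Real.sq_sqrt (Finset.sum_nonneg fun _ _ => sq_nonneg _)]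
  exact Finset.sum_congr rfl fun j _ => by rw [blk_apply]

lemma norm_blk_le {m n : ℕ} (x : EuclideanSpace ℝ (Fin m × Fin n)) (i : Fin m) :
    ‖blk x i‖ ≤ ‖x‖ := by
  have h : ‖blk x i‖ ^ 2 ≤ ‖x‖ ^ 2 := by
    rw [norm_sq_eq_sum_blk]
    exact Finset.single_le_sum (f := fun i => ‖blk x i‖ ^ 2)
      (fun j _ => sq_nonneg _) (Finset.mem_univ i)
  nlinarith [norm_nonneg (blk x i), norm_nonneg x]

lemma blk_continuous {m n : ℕ} (i : Fin m) :
    Continuous fun x : EuclideanSpace ℝ (Fin m × Fin n) => blk x i := by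
  refine LipschitzWith.continuous (K := 1) (LipschitzWith.of_dist_le_mul fun x y => ?_)
  simpa [dist_eq_norm, ← blk_sub] using norm_blk_le (x - y) i

/-- If at least one of the sets X_i is bounded, then the cycle penalty p is
coercive on X = X₁ × … × X_m and attains its minimum over X. -/
theorem cyclePenalty_coercive_of_bounded_factor {m n : ℕ} [NeZero m]
    (hm : 2 ≤ m) (τ : ℝ) (hτ : 0 < τ)
    (X : Fin m → Set (EuclideanSpace ℝ (Fin n)))
    (hXne : ∀ i, (X i).Nonempty) (hXconv : ∀ i, Convex ℝ (X i))
    (hXcl : ∀ i, IsClosed (X i))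
    (i₀ : Fin m) (hbd : Bornology.IsBounded (X i₀)) :
    (∀ M : ℝ, ∃ R : ℝ, ∀ x : EuclideanSpace ℝ (Fin m × Fin n),
        (∀ i, blk x i ∈ X i) → R ≤ ‖x‖ → M ≤ cyclePenalty τ x) ∧
      ∃ xbar : EuclideanSpace ℝ (Fin m × Fin n), (∀ i, blk xbar i ∈ X i) ∧
        ∀ y, (∀ i, blk y i ∈ X i) → cyclePenalty τ xbar ≤ cyclePenalty τ y := by
  have hc : (0:ℝ) < (2 * τ)⁻¹ := by positivity
  have hmpos : (0:ℝ) < (m:ℝ) := by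
    have : 0 < m := Nat.lt_of_lt_of_le (by norm_num) hm
    exact_mod_cast this
  obtain ⟨B₀, hB₀⟩ := isBounded_iff_forall_norm_le.mp hbd
  set B := max B₀ 0 with hBdef
  have hB0 : (0:ℝ) ≤ B := le_max_right _ _
  have hB : ∀ y ∈ X i₀, ‖y‖ ≤ B := fun y hy => (hB₀ y hy).trans (le_max_left _ _)
  -- coercivity
  have key : ∀ M : ℝ, ∃ R : ℝ, ∀ x : EuclideanSpace ℝ (Fin m × Fin n),
      (∀ i, blk x i ∈ X i) → R ≤ ‖x‖ → M ≤ cyclePenalty τ x := by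
    intro M
    set t := Real.sqrt (max M 0 / (2 * τ)⁻¹) with htdef
    have ht0 : 0 ≤ t := Real.sqrt_nonneg _
    have htsq : (2 * τ)⁻¹ * t ^ 2 = max M 0 := by
      rw [htdef, Real.sq_sqrt (by positivity)]
      field_simp
    refine ⟨Real.sqrt m * (B + m * t), fun x hx hR => ?_⟩
    set d := fun j : Fin m => blk x j - blk x (j + 1) with hddef
    have hne : (Finset.univ : Finset (Fin m)).Nonempty := Finset.univ_nonempty
    set maxd := Finset.univ.sup' hne (fun j => ‖d j‖) with hmaxd
    have h1 : ∀ j, ‖d j‖ ≤ maxd := fun j => Finset.le_sup' (fun j => ‖d j‖) (Finset.mem_univ j)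
    have h0 : 0 ≤ maxd := le_trans (norm_nonneg _) (h1 i₀)
    have h2 : maxd ^ 2 ≤ ∑ j : Fin m, ‖d j‖ ^ 2 := by
      obtain ⟨j, _, hj⟩ := Finset.exists_mem_eq_sup' hne (fun j => ‖d j‖)
      rw [hmaxd, hj]
      exact Finset.single_le_sum (f := fun j => ‖d j‖ ^ 2)
        (fun j _ => sq_nonneg _) (Finset.mem_univ j)
    open Fin.NatCast in
    have h3 : ∀ k : ℕ, ‖blk x (i₀ + (k : Fin m)) - blk x i₀‖ ≤ k * maxd := by
      intro k
      induction k with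
      | zero => simp
      | succ k ih =>
        have hstep : (i₀ + ((k+1 : ℕ) : Fin m)) = (i₀ + (k : Fin m)) + 1 := by
          open Fin.CommRing in (push_cast; ring)
        calc ‖blk x (i₀ + ((k+1 : ℕ) : Fin m)) - blk x i₀‖
            ≤ ‖blk x (i₀ + ((k+1:ℕ) : Fin m)) - blk x (i₀ + (k : Fin m))‖
              + ‖blk x (i₀ + (k : Fin m)) - blk x i₀‖ := norm_sub_le_norm_sub_add_norm_sub _ _ _
          _ ≤ maxd + k * maxd := by
              refine add_le_add ?_ ih
              have := h1 (i₀ + (k : Fin m))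
              rw [hddef] at this
              simpa [hstep, norm_sub_rev, add_assoc] using this
          _ = (k+1 : ℕ) * maxd := by push_cast; ring
    open Fin.NatCast in
    have h4 : ∀ i, ‖blk x i‖ ≤ B + m * maxd := by
      intro i
      have hk : i₀ + (((i - i₀).val : ℕ) : Fin m) = i := by
        rw [Fin.cast_val_eq_self]; exact add_sub_cancel i₀ i
      have hkm : ((i - i₀).val : ℝ) ≤ (m : ℝ) := by
        exact_mod_cast le_of_lt (i - i₀).isLt
      have := h3 (i - i₀).val
      rw [hk] at this
      have h5 : ‖blk x i - blk x i₀‖ ≤ (m:ℝ) * maxd :=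
        this.trans (mul_le_mul_of_nonneg_right hkm h0)
      calc ‖blk x i‖ ≤ ‖blk x i₀‖ + ‖blk x i - blk x i₀‖ := by
            have := norm_add_le (blk x i₀) (blk x i - blk x i₀); simpa using this
        _ ≤ B + m * maxd := add_le_add (hB _ (hx i₀)) h5
    have h6 : ‖x‖ ≤ Real.sqrt m * (B + m * maxd) := by
      have hsq : ‖x‖ ^ 2 ≤ (m:ℝ) * (B + m * maxd) ^ 2 := by
        rw [norm_sq_eq_sum_blk]
        calc ∑ i : Fin m, ‖blk x i‖ ^ 2 ≤ ∑ _i : Fin m, (B + m * maxd) ^ 2 :=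
              Finset.sum_le_sum fun i _ => by
                have := h4 i; nlinarith [norm_nonneg (blk x i)]
          _ = (m:ℝ) * (B + m * maxd) ^ 2 := by simp [mul_comm]
      have hrhs : 0 ≤ Real.sqrt m * (B + m * maxd) := by positivity
      have : (Real.sqrt m * (B + m * maxd)) ^ 2 = (m:ℝ) * (B + m * maxd) ^ 2 := by
        rw [mul_pow, Real.sq_sqrt hmpos.le]
      nlinarith [norm_nonneg x]
    have htmaxd : t ≤ maxd := by
      have h7 : Real.sqrt m * (B + m * t) ≤ Real.sqrt m * (B + m * maxd) := hR.trans h6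
      have hsp : 0 < Real.sqrt m := Real.sqrt_pos.mpr hmpos
      have := (mul_le_mul_iff_right₀ hsp).mp h7
      nlinarith
    calc M ≤ max M 0 := le_max_left _ _
      _ = (2 * τ)⁻¹ * t ^ 2 := htsq.symm
      _ ≤ (2 * τ)⁻¹ * maxd ^ 2 := mul_le_mul_of_nonneg_left (pow_le_pow_left₀ ht0 htmaxd 2) hc.le
      _ ≤ (2 * τ)⁻¹ * ∑ j : Fin m, ‖d j‖ ^ 2 := mul_le_mul_of_nonneg_left h2 hc.le
      _ = cyclePenalty τ x := rfl
  refine ⟨key, ?_⟩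
  -- existence of minimizer
  have hcont : Continuous (cyclePenalty τ (n := n) (m := m)) := by
    unfold cyclePenalty
    exact continuous_const.mul (continuous_finset_sum _ fun i _ =>
      (((blk_continuous i).sub (blk_continuous (i+1))).norm.pow 2))
  set S : Set (EuclideanSpace ℝ (Fin m × Fin n)) := {x | ∀ i, blk x i ∈ X i} with hSdef
  have hScl : IsClosed S := by
    have : S = ⋂ i, (fun x => blk x i) ⁻¹' (X i) := by
      ext x; simp [hSdef, Set.mem_iInter]
    rw [this]
    exact isClosed_iInter fun i => (hXcl i).preimage (blk_continuous i)
  set x₀ : EuclideanSpace ℝ (Fin m × Fin n) :=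
    (WithLp.equiv 2 (Fin m × Fin n → ℝ)).symm fun p => (hXne p.1).some p.2 with hx₀def
  have hx₀S : x₀ ∈ S := by
    intro i
    have : blk x₀ i = (hXne i).some := by
      ext j; rfl
    rw [this]
    exact (hXne i).some_mem
  obtain ⟨R, hR⟩ := key (cyclePenalty τ x₀ + 1)
  set r := max R ‖x₀‖ with hrdef
  have hKcpt : IsCompact (S ∩ Metric.closedBall 0 r) :=
    (isCompact_closedBall (0 : EuclideanSpace ℝ (Fin m × Fin n)) r).inter_left hScl
  have hx₀K : x₀ ∈ S ∩ Metric.closedBall 0 r :=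
    ⟨hx₀S, mem_closedBall_zero_iff.mpr (le_max_right R ‖x₀‖)⟩
  obtain ⟨xbar, hxbarK, hmin⟩ := hKcpt.exists_isMinOn ⟨x₀, hx₀K⟩ hcont.continuousOn
  refine ⟨xbar, hxbarK.1, fun y hy => ?_⟩
  by_cases hyr : ‖y‖ ≤ r
  · exact hmin ⟨hy, mem_closedBall_zero_iff.mpr hyr⟩
  · push_neg at hyr
    have hRy : R ≤ ‖y‖ := le_of_lt (lt_of_le_of_lt (le_max_left _ _) hyr)
    have h1 := hR y hy hRy
    have h2 : cyclePenalty τ xbar ≤ cyclePenalty τ x₀ := hmin hx₀K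
    linarith
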